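/- (The paper's Theorem 1, general form: the merged outer-join query retrieves every original query without loss or error.) Fix S : Set ρ, key : ρ → κ, an index type ι, payload types β : ι → Type, relations T : (i : ι) → Set (κ × β i), and let M be the merged query. Let J : Set ι be the indices of the non-shared subqueries of one original query Q, whose result is the multi-way inner join Res(Q) := {(s, g) : ρ × ((j : J) → β j) | s ∈ S ∧ ∀ (j : J), (key s, g j) ∈ T j}. Then {(s, g) : ρ × ((j : J) → β j) | ∃ f, (s, f) ∈ M ∧ ∀ (j : J), f j = some (g j)} = Res(Q): selecting the rows of the merged query that are non-null on all indices in J and projecting onto those components recovers exactly the result of Q. -/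

import Mathlib

/-- The merged (outer-join) query: the shared subquery `S` outer-joined with
every non-shared subquery `T i`, all joins on the shared key. -/
def Merged {ρ κ : Type*} {ι : Type*} {β : ι → Type*} (key : ρ → κ) (S : Set ρ)
    (T : (i : ι) → Set (κ × β i)) : Set (ρ × ((i : ι) → Option (β i))) :=
  {p : ρ × ((i : ι) → Option (β i)) | p.1 ∈ S ∧ ∀ i,
    (p.2 i = none ∧ ∀ b, (key p.1, b) ∉ T i) ∨
    (∃ b, p.2 i = some b ∧ (key p.1, b) ∈ T i)}

/-!
A row of the merged query is non-null at `j` exactly when it carries a tuple of `T j` matching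
the key, so its non-null part on `J` is a row of the inner join. Conversely, a row `(s, g)` of
the inner join extends to a row of the merged query: keep `g` on `J` and, outside `J`, pick any
matching tuple, or null when there is none.
-/

def OuterMatch {κ β : Type*} (R : Set (κ × β)) (k : κ) (o : Option β) : Prop :=
  (o = none ∧ ∀ b, (k, b) ∉ R) ∨ ∃ b, o = some b ∧ (k, b) ∈ R

section OuterMatch

variable {κ β : Type*} {R : Set (κ × β)} {k : κ}

@[simp]
theorem outerMatch_some_iff {b : β} : OuterMatch R k (some b) ↔ (k, b) ∈ R := by
  simp [OuterMatch]

theorem exists_outerMatch (R : Set (κ × β)) (k : κ) : ∃ o, OuterMatch R k o := by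
  by_cases h : ∃ b, (k, b) ∈ R
  · obtain ⟨b, hb⟩ := h
    exact ⟨some b, outerMatch_some_iff.2 hb⟩
  · exact ⟨none, .inl ⟨rfl, fun b hb => h ⟨b, hb⟩⟩⟩

end OuterMatch

section Merged

variable {ρ κ ι : Type*} {β : ι → Type*} {key : ρ → κ} {S : Set ρ} {T : (i : ι) → Set (κ × β i)}

theorem mem_merged_iff {p : ρ × ((i : ι) → Option (β i))} :
    p ∈ Merged key S T ↔ p.1 ∈ S ∧ ∀ i, OuterMatch (T i) (key p.1) (p.2 i) :=
  Iff.rfl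

theorem exists_mem_merged_extending {J : Set ι} {s : ρ} (hs : s ∈ S) {g : (j : J) → β j}
    (hg : ∀ j : J, (key s, g j) ∈ T j) :
    ∃ f, (s, f) ∈ Merged key S T ∧ ∀ j : J, f j = some (g j) := by
  classical
  choose o ho using fun i => exists_outerMatch (T i) (key s)
  refine ⟨fun i => if h : i ∈ J then some (g ⟨i, h⟩) else o i,
    mem_merged_iff.2 ⟨hs, fun i => ?_⟩, fun j => dif_pos j.2⟩
  dsimp only
  split_ifs with h
  exacts [outerMatch_some_iff.2 (hg ⟨i, h⟩), ho i]

end Merged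

/-- The paper's Theorem 1, general form: the merged outer-join query retrieves
every original query without loss or error. -/
theorem merged_recovers_original_query {ρ κ : Type*} {ι : Type*} {β : ι → Type*}
    (key : ρ → κ) (S : Set ρ) (T : (i : ι) → Set (κ × β i)) (J : Set ι) :
    {q : ρ × ((j : J) → β j) | ∃ f, (q.1, f) ∈ Merged key S T ∧
        ∀ j : J, f j = some (q.2 j)} =
      {q : ρ × ((j : J) → β j) | q.1 ∈ S ∧ ∀ j : J, (key q.1, q.2 j) ∈ T j} := by
  ext ⟨s, g⟩
  constructor
  · rintro ⟨f, hf, hfg⟩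
    obtain ⟨hs, hmatch⟩ := mem_merged_iff.1 hf
    exact ⟨hs, fun j => outerMatch_some_iff.1 (hfg j ▸ hmatch j)⟩
  · rintro ⟨hs, hg⟩
    exact exists_mem_merged_extending hs hg
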